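/- For a monomial ideal M, the following are equivalent: (1) there exists a graded non-monomial ideal I with mono(I) = M; (3) there exist distinct monomials u₁ ≠ u₂ with u₁, u₂ ∉ M, deg u₁ = deg u₂, and M : u₁ = M : u₂. -/

import Mathlib

open MvPolynomial

/-- A (monic) monomial in a polynomial ring. -/
def IsMonomial {k : Type*} [Field k] {n : ℕ} (f : MvPolynomial (Fin n) k) : Prop :=
  ∃ s : Fin n →₀ ℕ, f = MvPolynomial.monomial s 1

/-- `mono I` is the largest monomial subideal of `I`: the ideal generated by all
monomials contained in `I`. -/
noncomputable def mono {k : Type*} [Field k] {n : ℕ} (I : Ideal (MvPolynomial (Fin n) k)) :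
    Ideal (MvPolynomial (Fin n) k) :=
  Ideal.span {f | IsMonomial f ∧ f ∈ I}

/-- A monomial ideal is one generated by its monomials. -/
def IsMonomialIdeal {k : Type*} [Field k] {n : ℕ} (I : Ideal (MvPolynomial (Fin n) k)) : Prop :=
  mono I = I

/-- The homogeneous maximal ideal `(x₁, …, xₙ)`. -/
noncomputable def maxIdeal (k : Type*) [Field k] (n : ℕ) : Ideal (MvPolynomial (Fin n) k) :=
  Ideal.span (Set.range MvPolynomial.X)

/-- A graded (homogeneous) ideal. -/
def IsHomogeneousIdeal {k : Type*} [Field k] {n : ℕ}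
    (I : Ideal (MvPolynomial (Fin n) k)) : Prop :=
  ∀ f ∈ I, ∀ i : ℕ, MvPolynomial.homogeneousComponent i f ∈ I

/-!
Suppose `mono I = M` with `I` graded and not monomial. Among the nonzero homogeneous elements of `I`
supported on monomials outside `M`, take one, `f`, with the fewest terms. For a monomial `x^w`, the
part of `x^w f` supported outside `M` again lies in `I` and has at most as many terms as `f`, so by
minimality it is either `0` or all of `x^w f`. Hence for any two terms `u₁, u₂` of `f`, `x^w u₁ ∈ M`
iff `x^w u₂ ∈ M`, that is `M : u₁ = M : u₂`; and `f` has two terms, since a single one would be a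
monomial of `I` outside `M`.

Conversely, take `I = M + (u₁ + u₂)`. If a monomial `x^m ∉ M` were `g + p (u₁ + u₂)` with
`g ∈ M`, drop from `p` its terms lying in `M : u₁ = M : u₂`; for the remainder `p'`, the product
`p' (u₁ + u₂)` is supported outside `M`, so `x^m = p' (u₁ + u₂)`. This is impossible: a nonzero
multiple of a binomial has at least two terms, coming from the lex-largest and the lex-smallest
term of `p'`.
-/

namespace MvPolynomial

variable {σ R : Type*} [CommSemiring R]

theorem support_mul_monomial_one (p : MvPolynomial σ R) (a : σ →₀ ℕ) :
    (p * monomial a 1).support = p.support.map (addRightEmbedding a) :=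
  AddMonoidAlgebra.support_coeff_mul_single p _ (by simp) _

theorem support_monomial_one_mul (p : MvPolynomial σ R) (a : σ →₀ ℕ) :
    (monomial a 1 * p).support = p.support.map (addLeftEmbedding a) :=
  AddMonoidAlgebra.support_coeff_single_mul p _ (by simp) _

theorem IsHomogeneous.of_support_subset {φ ψ : MvPolynomial σ R} {d : ℕ} (hφ : φ.IsHomogeneous d)
    (h : ψ.support ⊆ φ.support) : ψ.IsHomogeneous d :=
  fun _ hs => hφ (mem_support_iff.1 (h (mem_support_iff.2 hs)))

theorem coeff_add_mul_monomial_add_monomial {p : MvPolynomial σ R} {a b v : σ →₀ ℕ}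
    (h : ∀ w ∈ p.support, w + b ≠ v + a) :
    coeff (v + a) (p * (monomial a 1 + monomial b 1)) = coeff v p := by
  have hb : coeff (v + a) (p * monomial b 1) = 0 := by
    rw [coeff_mul_monomial']
    split_ifs with hle
    · rw [mul_one, ← notMem_support_iff]
      exact fun hw => h _ hw (tsub_add_cancel_of_le hle)
    · rfl
  rw [mul_add, coeff_add, hb, coeff_mul_monomial, mul_one, add_zero]

theorem one_lt_card_support_mul_monomial_add_monomial [LinearOrder σ] {p : MvPolynomial σ R}
    (hp : p ≠ 0) {a b : σ →₀ ℕ} (hab : toLex b < toLex a) :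
    1 < (p * (monomial a 1 + monomial b 1)).support.card := by
  obtain ⟨w₀, hw₀, hmax⟩ := p.support.exists_max_image toLex (support_nonempty.2 hp)
  obtain ⟨w₁, hw₁, hmin⟩ := p.support.exists_min_image toLex (support_nonempty.2 hp)
  have top : coeff (w₀ + a) (p * (monomial a 1 + monomial b 1)) = coeff w₀ p := by
    refine coeff_add_mul_monomial_add_monomial fun w hw heq => ?_
    have : toLex (w₀ + a) ≤ toLex w₀ + toLex b := heq ▸ add_le_add_left (hmax w hw) _
    exact not_lt_of_ge this (add_lt_add_right hab _)
  have bottom : coeff (w₁ + b) (p * (monomial b 1 + monomial a 1)) = coeff w₁ p := by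
    refine coeff_add_mul_monomial_add_monomial fun w hw heq => ?_
    have : toLex w₁ + toLex a ≤ toLex (w₁ + b) := heq ▸ add_le_add_left (hmin w hw) _
    exact not_lt_of_ge this (add_lt_add_right hab _)
  rw [add_comm (monomial b 1)] at bottom
  have hne : w₁ + b ≠ w₀ + a := fun h =>
    (add_lt_add_of_le_of_lt (hmin w₀ hw₀) hab).ne (congrArg toLex h)
  refine Finset.one_lt_card.2 ⟨w₁ + b, ?_, w₀ + a, ?_, hne⟩
  · rw [mem_support_iff, bottom]; exact mem_support_iff.1 hw₁
  · rw [mem_support_iff, top]; exact mem_support_iff.1 hw₀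

end MvPolynomial

section MonomialIdeal

variable {k : Type*} [Field k] {n : ℕ} {M I : Ideal (MvPolynomial (Fin n) k)}
  {f : MvPolynomial (Fin n) k}

theorem mono_le (I : Ideal (MvPolynomial (Fin n) k)) : mono I ≤ I :=
  Ideal.span_le.2 fun _ hf => hf.2

theorem mem_of_forall_monomial_mem (h : ∀ s ∈ f.support, monomial s (1 : k) ∈ M) : f ∈ M := by
  rw [f.as_sum]
  refine Ideal.sum_mem _ fun s hs => ?_
  rw [← mul_one (coeff s f), ← smul_eq_mul, ← smul_monomial]
  exact Submodule.smul_of_tower_mem _ _ (h s hs)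

theorem IsMonomialIdeal.eq_span (hM : IsMonomialIdeal M) :
    M = Ideal.span ((fun s => monomial s (1 : k)) '' {s | monomial s 1 ∈ M}) := by
  refine hM.symm.trans (congrArg Ideal.span ?_)
  ext f
  constructor
  · rintro ⟨⟨s, rfl⟩, hs⟩
    exact ⟨s, hs, rfl⟩
  · rintro ⟨s, hs, rfl⟩
    exact ⟨⟨s, rfl⟩, hs⟩

theorem IsMonomialIdeal.mem_iff (hM : IsMonomialIdeal M) :
    f ∈ M ↔ ∀ s ∈ f.support, monomial s (1 : k) ∈ M := by
  refine ⟨fun hf s hs => ?_, mem_of_forall_monomial_mem⟩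
  rw [hM.eq_span, mem_ideal_span_monomial_image] at hf
  obtain ⟨t, ht, hts⟩ := hf s hs
  rw [← tsub_add_cancel_of_le hts, ← one_mul (1 : k), ← monomial_mul]
  exact M.mul_mem_left _ ht

theorem IsMonomialIdeal.mul_monomial_mem_iff (hM : IsMonomialIdeal M) (g : MvPolynomial (Fin n) k)
    (a : Fin n →₀ ℕ) : g * monomial a 1 ∈ M ↔ ∀ w ∈ g.support, monomial (w + a) (1 : k) ∈ M := by
  rw [hM.mem_iff, support_mul_monomial_one, Finset.forall_mem_map]
  rfl

theorem IsMonomialIdeal.colon_eq_colon (hM : IsMonomialIdeal M) {a b : Fin n →₀ ℕ}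
    (h : ∀ w, monomial (w + a) (1 : k) ∈ M ↔ monomial (w + b) (1 : k) ∈ M) :
    M.colon (Ideal.span {monomial a (1 : k)}) = M.colon (Ideal.span {monomial b (1 : k)}) := by
  ext g
  simp only [Ideal.mem_colon_span_singleton, hM.mul_monomial_mem_iff, h]

section Homogeneous

attribute [local instance] MvPolynomial.gradedAlgebra

theorem isHomogeneousIdeal_iff (I : Ideal (MvPolynomial (Fin n) k)) :
    IsHomogeneousIdeal I ↔ I.IsHomogeneous (homogeneousSubmodule (Fin n) k) := by
  refine ⟨fun h i f hf => ?_, fun h f hf i => ?_⟩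
  · have := h f hf i
    rwa [← decomposition.decompose'_apply] at this
  · rw [← decomposition.decompose'_apply]
    exact h i hf

theorem isHomogeneousIdeal_span {s : Set (MvPolynomial (Fin n) k)}
    (hs : ∀ f ∈ s, ∃ d, f.IsHomogeneous d) : IsHomogeneousIdeal (Ideal.span s) :=
  (isHomogeneousIdeal_iff _).2 <| Ideal.homogeneous_span _ s fun f hf =>
    (hs f hf).imp fun _ h => (mem_homogeneousSubmodule _ _).2 h

end Homogeneous

theorem IsMonomialIdeal.isHomogeneousIdeal_sup_span (hM : IsMonomialIdeal M)
    {q : MvPolynomial (Fin n) k} {d : ℕ} (hq : q.IsHomogeneous d) :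
    IsHomogeneousIdeal (M ⊔ Ideal.span {q}) := by
  rw [hM.eq_span, ← Ideal.span_union]
  refine isHomogeneousIdeal_span ?_
  rintro f (⟨s, -, rfl⟩ | rfl)
  exacts [⟨_, isHomogeneous_monomial _ rfl⟩, ⟨d, hq⟩]

def standardMonomials (M : Ideal (MvPolynomial (Fin n) k)) : Set (Fin n →₀ ℕ) :=
  {s | monomial s (1 : k) ∉ M}

open Classical in
noncomputable def standardPart (M : Ideal (MvPolynomial (Fin n) k)) (f : MvPolynomial (Fin n) k) :
    MvPolynomial (Fin n) k :=
  ∑ s ∈ f.support with s ∈ standardMonomials M, monomial s (coeff s f)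

open Classical in
theorem coeff_standardPart (t : Fin n →₀ ℕ) :
    coeff t (standardPart M f) = if t ∈ standardMonomials M then coeff t f else 0 := by
  rw [standardPart, coeff_sum]
  simp only [coeff_monomial, Finset.sum_ite_eq', Finset.mem_filter, mem_support_iff]
  split_ifs <;> tauto

open Classical in
theorem support_standardPart :
    (standardPart M f).support = f.support.filter (· ∈ standardMonomials M) := by
  ext t
  simp only [mem_support_iff, coeff_standardPart, Finset.mem_filter]
  split_ifs <;> tauto

theorem standardPart_mem_restrictSupport :
    standardPart M f ∈ restrictSupport k (standardMonomials M) := by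
  classical
  rw [mem_restrictSupport_iff, support_standardPart, Finset.coe_filter]
  exact fun _ ht => ht.2

theorem sub_standardPart_mem : f - standardPart M f ∈ M := by
  classical
  refine mem_of_forall_monomial_mem fun t ht => ?_
  rw [mem_support_iff, coeff_sub, coeff_standardPart] at ht
  by_contra hM
  exact ht (by rw [if_pos (show t ∈ standardMonomials M from hM), sub_self])

theorem IsMonomialIdeal.eq_zero_of_mem_restrictSupport (hM : IsMonomialIdeal M) (hfM : f ∈ M)
    (hf : f ∈ restrictSupport k (standardMonomials M)) : f = 0 := by
  rw [← support_eq_empty, Finset.eq_empty_iff_forall_notMem]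
  exact fun t ht => hf ht (hM.mem_iff.1 hfM t ht)

theorem standardPart_mem (hMI : M ≤ I) (hf : f ∈ I) : standardPart M f ∈ I := by
  simpa using I.sub_mem hf (hMI (sub_standardPart_mem (f := f)))

theorem exists_isHomogeneous_mem_restrictSupport (hI : IsHomogeneousIdeal I) (hMI : M ≤ I)
    (hIM : ¬ I ≤ M) :
    ∃ f ∈ I, f ≠ 0 ∧ (∃ d, f.IsHomogeneous d) ∧ f ∈ restrictSupport k (standardMonomials M) := by
  obtain ⟨f₀, hf₀I, hf₀M⟩ := Set.not_subset.1 hIM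
  obtain ⟨i, hiM⟩ : ∃ i, homogeneousComponent i f₀ ∉ M := by
    by_contra! h
    exact hf₀M (sum_homogeneousComponent f₀ ▸ Ideal.sum_mem _ fun i _ => h i)
  set h := homogeneousComponent i f₀
  refine ⟨standardPart M h, ?_, fun h0 => hiM ?_, ⟨i, ?_⟩, standardPart_mem_restrictSupport⟩
  · exact standardPart_mem hMI (hI f₀ hf₀I i)
  · simpa [h0] using (sub_standardPart_mem : h - standardPart M h ∈ M)
  · classical
    refine (homogeneousComponent_isHomogeneous i f₀).of_support_subset ?_
    rw [support_standardPart]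
    exact Finset.filter_subset _ _

theorem monomial_add_mem_of_minimal (hM : IsMonomialIdeal M) (hMI : M ≤ I)
    (hfI : f ∈ I) {d : ℕ} (hf : f.IsHomogeneous d)
    (hmin : ∀ g ∈ I, g ≠ 0 → (∃ e, g.IsHomogeneous e) →
      g ∈ restrictSupport k (standardMonomials M) → f.support.card ≤ g.support.card)
    (w : Fin n →₀ ℕ) {t₁ t₂ : Fin n →₀ ℕ} (ht₁ : t₁ ∈ f.support) (ht₂ : t₂ ∈ f.support)
    (h₁ : monomial (w + t₁) (1 : k) ∈ M) : monomial (w + t₂) (1 : k) ∈ M := by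
  classical
  set g := monomial w 1 * f
  have hsupp : g.support = f.support.map (addLeftEmbedding w) := support_monomial_one_mul f w
  by_cases h0 : standardPart M g = 0
  · have hgM : g ∈ M := by simpa [h0] using (sub_standardPart_mem : g - standardPart M g ∈ M)
    exact hM.mem_iff.1 hgM _ (hsupp ▸ Finset.mem_map_of_mem _ ht₂)
  · have hgI : standardPart M g ∈ I := standardPart_mem hMI (I.mul_mem_left _ hfI)
    have hhom : (standardPart M g).IsHomogeneous (w.degree + d) := by
      refine ((isHomogeneous_monomial 1 rfl).mul hf).of_support_subset ?_
      rw [support_standardPart]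
      exact Finset.filter_subset _ _
    have hcard := hmin _ hgI h0 ⟨_, hhom⟩ standardPart_mem_restrictSupport
    have heq : (standardPart M g).support = g.support := by
      refine Finset.eq_of_subset_of_card_le ?_ ?_
      · rw [support_standardPart]; exact Finset.filter_subset _ _
      · rwa [hsupp, Finset.card_map]
    have hmem : w + t₁ ∈ (standardPart M g).support :=
      heq ▸ hsupp ▸ Finset.mem_map_of_mem _ ht₁
    rw [support_standardPart, Finset.mem_filter] at hmem
    exact absurd h₁ hmem.2

theorem one_lt_card_support_of_mono_le (hmono : mono I ≤ M) (hfI : f ∈ I) (hf0 : f ≠ 0)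
    (hf : f ∈ restrictSupport k (standardMonomials M)) :
    1 < f.support.card := by
  by_contra! hcard
  obtain ⟨s, hs⟩ :=
    Finset.card_eq_one.1 (hcard.antisymm (Finset.card_pos.2 (support_nonempty.2 hf0)))
  have hfs : f = monomial s (coeff s f) := eq_monomial_of_support_subset_singleton (by simp [hs])
  have hsf : s ∈ f.support := hs ▸ Finset.mem_singleton_self s
  have hsI : monomial s (1 : k) ∈ I := by
    rw [← inv_mul_cancel₀ (mem_support_iff.1 hsf), ← C_mul_monomial, ← hfs]
    exact I.mul_mem_left _ hfI
  exact hf hsf (hmono (Ideal.subset_span ⟨⟨s, rfl⟩, hsI⟩))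

theorem IsMonomialIdeal.exists_monomial_add_mem_iff (hM : IsMonomialIdeal M)
    (hI : IsHomogeneousIdeal I) (hInm : ¬ IsMonomialIdeal I) (hmono : mono I = M) :
    ∃ a b : Fin n →₀ ℕ, a ≠ b ∧ a ∈ standardMonomials M ∧ b ∈ standardMonomials M ∧
      a.degree = b.degree ∧ ∀ w, monomial (w + a) (1 : k) ∈ M ↔ monomial (w + b) (1 : k) ∈ M := by
  have hMI : M ≤ I := hmono ▸ mono_le I
  have hIM : ¬ I ≤ M := fun h => hInm (hmono.trans (le_antisymm hMI h))
  obtain ⟨f, ⟨hfI, hf0, ⟨d, hf⟩, hfst⟩, hmin⟩ := (measure fun f : MvPolynomial (Fin n) k =>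
    f.support.card).wf.has_min _ (exists_isHomogeneous_mem_restrictSupport hI hMI hIM)
  have hmin' : ∀ g ∈ I, g ≠ 0 → (∃ e, g.IsHomogeneous e) →
      g ∈ restrictSupport k (standardMonomials M) → f.support.card ≤ g.support.card :=
    fun g hgI hg0 hgh hgs => not_lt.1 (hmin g ⟨hgI, hg0, hgh, hgs⟩)
  obtain ⟨a, ha, b, hb, hab⟩ :=
    Finset.one_lt_card.1 (one_lt_card_support_of_mono_le hmono.le hfI hf0 hfst)
  refine ⟨a, b, hab, hfst ha, hfst hb, ?_, fun w =>
    ⟨monomial_add_mem_of_minimal hM hMI hfI hf hmin' w ha hb,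
      monomial_add_mem_of_minimal hM hMI hfI hf hmin' w hb ha⟩⟩
  rw [Finsupp.degree_eq_weight_one]
  exact (hf (mem_support_iff.1 ha)).trans (hf (mem_support_iff.1 hb)).symm

theorem mul_monomial_mem_restrictSupport {a : Fin n →₀ ℕ} {p : MvPolynomial (Fin n) k}
    (hp : p ∈ restrictSupport k (standardMonomials (M.colon (Ideal.span {monomial a (1 : k)})))) :
    p * monomial a 1 ∈ restrictSupport k (standardMonomials M) := by
  rw [mem_restrictSupport_iff, support_mul_monomial_one, Finset.coe_map]
  rintro _ ⟨w, hw, rfl⟩ hwM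
  refine hp hw (Ideal.mem_colon_span_singleton.2 ?_)
  rwa [monomial_mul, one_mul]

theorem IsMonomialIdeal.monomial_mem_of_mem_sup_span (hM : IsMonomialIdeal M) {a b m : Fin n →₀ ℕ}
    (hab : a ≠ b)
    (hcol : M.colon (Ideal.span {monomial a (1 : k)}) = M.colon (Ideal.span {monomial b (1 : k)}))
    (hm : monomial m (1 : k) ∈ M ⊔ Ideal.span {monomial a 1 + monomial b 1}) :
    monomial m (1 : k) ∈ M := by
  by_contra hmM
  obtain ⟨g, hg, _, hh, heq⟩ := Submodule.mem_sup.1 hm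
  obtain ⟨p, rfl⟩ := Ideal.mem_span_singleton'.1 hh
  set J := M.colon (Ideal.span {monomial a (1 : k)})
  set p' := standardPart J p
  have hJ : p - p' ∈ J := sub_standardPart_mem
  have hrestM : (p - p') * (monomial a 1 + monomial b 1) ∈ M := by
    rw [mul_add]
    exact M.add_mem (Ideal.mem_colon_span_singleton.1 hJ)
      (Ideal.mem_colon_span_singleton.1 (hcol ▸ hJ))
  have hstd : p' * (monomial a 1 + monomial b 1) ∈ restrictSupport k (standardMonomials M) := by
    rw [mul_add]
    exact add_mem (mul_monomial_mem_restrictSupport standardPart_mem_restrictSupport)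
      (mul_monomial_mem_restrictSupport (hcol ▸ standardPart_mem_restrictSupport))
  have hx : monomial m 1 = p' * (monomial a 1 + monomial b 1) := by
    rw [← sub_eq_zero]
    refine hM.eq_zero_of_mem_restrictSupport ?_ (sub_mem ?_ hstd)
    · convert M.add_mem hg hrestM using 1
      rw [← heq]
      ring
    · exact (monomial_mem_restrictSupport k).2 (Or.inl hmM)
  have hp' : p' ≠ 0 := by
    rintro h
    simp [h] at hx
  have hcard : (p' * (monomial a 1 + monomial b 1)).support.card = 1 := by
    classical
    rw [← hx, support_monomial, if_neg one_ne_zero, Finset.card_singleton]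
  rcases (toLex.injective.ne hab).lt_or_gt with hlt | hlt
  · rw [add_comm] at hcard
    exact (one_lt_card_support_mul_monomial_add_monomial hp' hlt).ne' hcard
  · exact (one_lt_card_support_mul_monomial_add_monomial hp' hlt).ne' hcard

theorem IsMonomialIdeal.mono_sup_span_monomial_add_monomial (hM : IsMonomialIdeal M)
    {a b : Fin n →₀ ℕ} (hab : a ≠ b)
    (hcol : M.colon (Ideal.span {monomial a (1 : k)}) = M.colon (Ideal.span {monomial b (1 : k)})) :
    mono (M ⊔ Ideal.span {monomial a 1 + monomial b 1}) = M := by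
  refine le_antisymm (Ideal.span_le.2 ?_) (hM.ge.trans (Ideal.span_mono fun f hf => ?_))
  · rintro _ ⟨⟨m, rfl⟩, hm⟩
    exact hM.monomial_mem_of_mem_sup_span hab hcol hm
  · exact ⟨hf.1, le_sup_left (a := M) hf.2⟩

end MonomialIdeal

theorem mono_characterization {k : Type*} [Field k] {n : ℕ}
    (M : Ideal (MvPolynomial (Fin n) k)) (hM : IsMonomialIdeal M) :
    (∃ I : Ideal (MvPolynomial (Fin n) k),
        IsHomogeneousIdeal I ∧ ¬ IsMonomialIdeal I ∧ mono I = M) ↔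
      (∃ u₁ u₂ : MvPolynomial (Fin n) k, IsMonomial u₁ ∧ IsMonomial u₂ ∧ u₁ ≠ u₂ ∧
        u₁ ∉ M ∧ u₂ ∉ M ∧ u₁.totalDegree = u₂.totalDegree ∧
        Submodule.colon M (Ideal.span {u₁}) = Submodule.colon M (Ideal.span {u₂})) := by
  constructor
  · rintro ⟨I, hI, hInm, hmono⟩
    obtain ⟨a, b, hab, ha, hb, hdeg, hshift⟩ := hM.exists_monomial_add_mem_iff hI hInm hmono
    refine ⟨monomial a 1, monomial b 1, ⟨a, rfl⟩, ⟨b, rfl⟩,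
      (monomial_left_injective one_ne_zero).ne hab, ha, hb, ?_, hM.colon_eq_colon hshift⟩
    rwa [totalDegree_monomial _ one_ne_zero, totalDegree_monomial _ one_ne_zero]
  · rintro ⟨_, _, ⟨a, rfl⟩, ⟨b, rfl⟩, hne, ha, -, hdeg, hcol⟩
    have hab : a ≠ b := fun h => hne (h ▸ rfl)
    rw [totalDegree_monomial _ one_ne_zero, totalDegree_monomial _ one_ne_zero] at hdeg
    have hq : (monomial a 1 + monomial b (1 : k)).IsHomogeneous a.degree :=
      (isHomogeneous_monomial _ rfl).add (isHomogeneous_monomial _ hdeg.symm)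
    have hmono := hM.mono_sup_span_monomial_add_monomial hab hcol
    refine ⟨_, hM.isHomogeneousIdeal_sup_span hq, fun hI => ha ?_, hmono⟩
    have hqM : monomial a 1 + monomial b (1 : k) ∈ M :=
      hmono ▸ hI.symm ▸ Ideal.mem_sup_right (Ideal.mem_span_singleton_self _)
    exact hM.mem_iff.1 hqM a (by simp [mem_support_iff, coeff_monomial, hab.symm])
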